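/- The function φ(x) = 1 - E[tanh(X/2)] with X ~ N(x,2x) satisfies φ(x) → 0 as x → ∞ and φ(x) → 1 as x → 0⁺; consequently the SPC node Gaussian-approximation update m ↦ φ^{-1}(1 - (1-φ(m))^{K-1}) is well-defined and nondecreasing for m > 0. -/

import Mathlib

open Real Filter
open MeasureTheory Topology

/-- The Gaussian-approximation function of density evolution:
`φ(x) = 1 - (1/√(4πx)) ∫ tanh(u/2) e^{-(u-x)²/(4x)} du` for `x > 0`, `φ(0) = 1`
(i.e. `φ(x) = 1 - E[tanh(X/2)]` for `X ~ N(x, 2x)`). -/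
noncomputable def phiGA (x : ℝ) : ℝ :=
  if x = 0 then 1
  else 1 - (1 / Real.sqrt (4 * π * x)) *
      ∫ u : ℝ, Real.tanh (u / 2) * Real.exp (-(u - x) ^ 2 / (4 * x))

lemma tanh_half (t : ℝ) : Real.tanh (t/2) = (Real.exp t - 1)/(Real.exp t + 1) := by
  have h1 : Real.exp t = Real.exp (t/2) * Real.exp (t/2) := by
    rw [← Real.exp_add]; ring_nf
  have h2 : (0:ℝ) < Real.exp (t/2) := Real.exp_pos _
  rw [Real.tanh_eq_sinh_div_cosh, Real.sinh_eq, Real.cosh_eq, Real.exp_neg, h1]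
  have h3 : Real.exp (t/2) * Real.exp (t/2) + 1 > 0 := by positivity
  field_simp

lemma tanh_lt_one' (t : ℝ) : Real.tanh t < 1 := by
  have h := tanh_half (2*t)
  have h2 : (0:ℝ) < Real.exp (2*t) := Real.exp_pos _
  have : (2*t)/2 = t := by ring
  rw [this] at h
  rw [h, div_lt_one (by linarith)]
  linarith

lemma neg_one_lt_tanh' (t : ℝ) : -1 < Real.tanh t := by
  have := tanh_lt_one' (-t)
  rw [Real.tanh_neg] at this; linarith

lemma abs_tanh_le_one (t : ℝ) : |Real.tanh t| ≤ 1 :=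
  abs_le.2 ⟨(neg_one_lt_tanh' t).le, (tanh_lt_one' t).le⟩

lemma tanh_strictMono : StrictMono Real.tanh := by
  intro a b hab
  have ha := tanh_half (2*a); have hb := tanh_half (2*b)
  have e1 : (2*a)/2 = a := by ring
  have e2 : (2*b)/2 = b := by ring
  rw [e1] at ha; rw [e2] at hb
  rw [ha, hb]
  have hA : (0:ℝ) < Real.exp (2*a) := Real.exp_pos _
  have hB : (0:ℝ) < Real.exp (2*b) := Real.exp_pos _
  have hAB : Real.exp (2*a) < Real.exp (2*b) := Real.exp_lt_exp.2 (by linarith)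
  rw [div_lt_div_iff₀ (by linarith) (by linarith)]
  nlinarith

/-- key pointwise inequality -/
lemma key_pointwise (a u : ℝ) :
    (1 + Real.exp (-u)) * Real.tanh (a/2) ≤
      Real.tanh ((a+u)/2) + Real.exp (-u) * Real.tanh ((a-u)/2) := by
  have hB : (0:ℝ) < Real.exp (a - u) := Real.exp_pos _
  have hU : (0:ℝ) < Real.exp u := Real.exp_pos _
  set B := Real.exp (a - u) with hBdef
  set U := Real.exp u with hUdef
  have ea : Real.exp a = B * U := by rw [hBdef, hUdef, ← Real.exp_add]; ring_nf
  have eau : Real.exp (a + u) = B * U * U := by rw [hBdef, hUdef, ← Real.exp_add, ← Real.exp_add]; ring_nf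
  have enu : Real.exp (-u) = U⁻¹ := by rw [hUdef, ← Real.exp_neg]
  rw [tanh_half (a+u), tanh_half (a-u), tanh_half a, ea, eau, enu]
  rw [← hBdef]
  have h1 : (0:ℝ) < B * U * U + 1 := by positivity
  have h2 : (0:ℝ) < B + 1 := by linarith
  have h3 : (0:ℝ) < B * U + 1 := by positivity
  have key : (B*U*U - 1)/(B*U*U + 1) + U⁻¹*((B - 1)/(B + 1)) - (1 + U⁻¹)*((B*U - 1)/(B*U + 1))
      = 2*B*(U-1)^2*(U+1) / (U*(B*U*U+1)*(B+1)*(B*U+1)) := by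
    field_simp
    ring
  have pos : 0 ≤ 2*B*(U-1)^2*(U+1) / (U*(B*U*U+1)*(B+1)*(B*U+1)) := by positivity
  linarith [key, pos]

lemma gauss_integral {b : ℝ} (hb : 0 < b) (m : ℝ) :
    ∫ u : ℝ, Real.exp (-b*(u-m)^2) = Real.sqrt (π/b) := by
  rw [← integral_gaussian b]
  exact integral_sub_right_eq_self (fun u => Real.exp (-b*u^2)) m

lemma gauss_integrable {b : ℝ} (hb : 0 < b) (m : ℝ) :
    Integrable (fun u : ℝ => Real.exp (-b*(u-m)^2)) :=
  (integrable_exp_neg_mul_sq hb).comp_sub_right m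

lemma exp4_eq (x m u : ℝ) : Real.exp (-(u-m)^2/(4*x)) = Real.exp (-(1/(4*x))*(u-m)^2) := by
  congr 1; ring

lemma int_gauss4 {x : ℝ} (hx : 0 < x) (m : ℝ) :
    ∫ u : ℝ, Real.exp (-(u-m)^2/(4*x)) = Real.sqrt (4*π*x) := by
  simp_rw [exp4_eq]
  rw [gauss_integral (by positivity) m]
  congr 1
  field_simp

lemma integrable4 {x : ℝ} (hx : 0 < x) (m : ℝ) :
    Integrable (fun u : ℝ => Real.exp (-(u-m)^2/(4*x))) := by
  simp_rw [exp4_eq]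
  exact gauss_integrable (by positivity) m

lemma integrable_bdd_gauss {x : ℝ} (hx : 0 < x) (m : ℝ) {f : ℝ → ℝ}
    (hf : Continuous f) (hbd : ∀ t, |f t| ≤ 1) :
    Integrable (fun u : ℝ => f u * Real.exp (-(u-m)^2/(4*x))) :=
  Integrable.bdd_mul (integrable4 hx m) hf.aestronglyMeasurable (c := 1) (Filter.Eventually.of_forall fun t => hbd t)

lemma continuous_tanh' : Continuous Real.tanh := by
  have h : Real.tanh = fun x => Real.sinh x / Real.cosh x := funext Real.tanh_eq_sinh_div_cosh
  rw [h]
  exact Real.continuous_sinh.div Real.continuous_cosh (fun x => (Real.cosh_pos x).ne')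

lemma key_ineq {δ : ℝ} (hδ : 0 < δ) (a : ℝ) :
    Real.tanh (a/2) * Real.sqrt (4*π*δ) ≤
      ∫ u : ℝ, Real.tanh ((a+u)/2) * Real.exp (-(u-δ)^2/(4*δ)) := by
  have hcont : Continuous (fun u : ℝ => Real.tanh ((a+u)/2)) :=
    continuous_tanh'.comp (by continuity)
  have hcont2 : Continuous (fun u : ℝ => Real.tanh ((a-u)/2)) :=
    continuous_tanh'.comp (by continuity)
  have hqneg : ∀ u : ℝ, Real.exp (-u) * Real.exp (-(u-δ)^2/(4*δ)) = Real.exp (-(u-(-δ))^2/(4*δ)) := by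
    intro u; rw [← Real.exp_add]; congr 1; field_simp; ring
  have I1 : Integrable (fun u : ℝ => Real.tanh ((a+u)/2) * Real.exp (-(u-δ)^2/(4*δ))) :=
    integrable_bdd_gauss hδ δ hcont (fun t => abs_tanh_le_one _)
  have I2 : Integrable (fun u : ℝ => Real.tanh ((a-u)/2) * (Real.exp (-u) * Real.exp (-(u-δ)^2/(4*δ)))) := by
    simp_rw [hqneg]
    exact integrable_bdd_gauss hδ (-δ) hcont2 (fun t => abs_tanh_le_one _)
  have I3 : Integrable (fun u : ℝ => Real.tanh (a/2) * Real.exp (-(u-δ)^2/(4*δ))) :=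
    (integrable4 hδ δ).const_mul _
  have I4 : Integrable (fun u : ℝ => Real.tanh (a/2) * (Real.exp (-u) * Real.exp (-(u-δ)^2/(4*δ)))) := by
    simp_rw [hqneg]
    exact (integrable4 hδ (-δ)).const_mul _
  -- reflection identity
  have refl : ∫ u : ℝ, Real.tanh ((a+u)/2) * Real.exp (-(u-δ)^2/(4*δ))
      = ∫ u : ℝ, Real.tanh ((a-u)/2) * (Real.exp (-u) * Real.exp (-(u-δ)^2/(4*δ))) := by
    rw [← integral_neg_eq_self (fun u : ℝ => Real.tanh ((a+u)/2) * Real.exp (-(u-δ)^2/(4*δ))) volume]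
    congr 1; funext u
    have e1 : a + -u = a - u := by ring
    rw [e1]
    congr 1
    rw [← Real.exp_add]
    congr 1
    field_simp
    ring
  have hA : ∫ u : ℝ, Real.tanh (a/2) * Real.exp (-(u-δ)^2/(4*δ)) = Real.tanh (a/2) * Real.sqrt (4*π*δ) := by
    rw [MeasureTheory.integral_const_mul, int_gauss4 hδ δ]
  have hB : ∫ u : ℝ, Real.tanh (a/2) * (Real.exp (-u) * Real.exp (-(u-δ)^2/(4*δ)))
      = Real.tanh (a/2) * Real.sqrt (4*π*δ) := by
    simp_rw [hqneg]
    rw [MeasureTheory.integral_const_mul, int_gauss4 hδ (-δ)]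
  have hmono : ∫ u : ℝ, (Real.tanh (a/2) * Real.exp (-(u-δ)^2/(4*δ))
        + Real.tanh (a/2) * (Real.exp (-u) * Real.exp (-(u-δ)^2/(4*δ))))
      ≤ ∫ u : ℝ, (Real.tanh ((a+u)/2) * Real.exp (-(u-δ)^2/(4*δ))
        + Real.tanh ((a-u)/2) * (Real.exp (-u) * Real.exp (-(u-δ)^2/(4*δ)))) := by
    refine integral_mono (I3.add I4) (I1.add I2) ?_
    intro u
    have hkp := key_pointwise a u
    have hq0 : (0:ℝ) ≤ Real.exp (-(u-δ)^2/(4*δ)) := (Real.exp_pos _).le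
    have := mul_le_mul_of_nonneg_right hkp hq0
    simp only []
    nlinarith [this]
  have e2 : ∫ u : ℝ, (Real.tanh (a/2) * Real.exp (-(u-δ)^2/(4*δ))
        + Real.tanh (a/2) * (Real.exp (-u) * Real.exp (-(u-δ)^2/(4*δ))))
      = 2 * (Real.tanh (a/2) * Real.sqrt (4*π*δ)) := by
    rw [integral_add I3 I4, hA, hB]; ring
  have e3 : ∫ u : ℝ, (Real.tanh ((a+u)/2) * Real.exp (-(u-δ)^2/(4*δ))
        + Real.tanh ((a-u)/2) * (Real.exp (-u) * Real.exp (-(u-δ)^2/(4*δ))))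
      = 2 * ∫ u : ℝ, Real.tanh ((a+u)/2) * Real.exp (-(u-δ)^2/(4*δ)) := by
    rw [integral_add I1 I2, ← refl]; ring
  rw [e2, e3] at hmono
  linarith

noncomputable def Itg (x : ℝ) : ℝ :=
  ∫ u : ℝ, Real.tanh (u / 2) * Real.exp (-(u - x) ^ 2 / (4 * x))

lemma conv_gauss {x1 δ : ℝ} (hx1 : 0 < x1) (hδ : 0 < δ) (w : ℝ) :
    ∫ u : ℝ, Real.exp (-(w-u-x1)^2/(4*x1)) * Real.exp (-(u-δ)^2/(4*δ))
      = Real.sqrt (4*π*x1*δ/(x1+δ)) * Real.exp (-(w-(x1+δ))^2/(4*(x1+δ))) := by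
  have hx2 : (0:ℝ) < x1 + δ := by linarith
  have hα : (0:ℝ) < (x1+δ)/(4*x1*δ) := by positivity
  have hpt : ∀ u : ℝ, Real.exp (-(w-u-x1)^2/(4*x1)) * Real.exp (-(u-δ)^2/(4*δ))
      = Real.exp (-(w-(x1+δ))^2/(4*(x1+δ))) * Real.exp (-((x1+δ)/(4*x1*δ))*(u - δ*w/(x1+δ))^2) := by
    intro u
    rw [← Real.exp_add, ← Real.exp_add]
    congr 1
    field_simp
    ring
  simp_rw [hpt]
  rw [MeasureTheory.integral_const_mul, gauss_integral hα (δ*w/(x1+δ))]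
  rw [mul_comm]
  congr 1
  congr 1
  field_simp

def shearE : (ℝ × ℝ) ≃ᵐ (ℝ × ℝ) where
  toEquiv := { toFun := fun p => (p.1 - p.2, p.2), invFun := fun p => (p.1 + p.2, p.2),
               left_inv := fun p => by simp, right_inv := fun p => by simp }
  measurable_toFun := (measurable_fst.sub measurable_snd).prodMk measurable_snd
  measurable_invFun := (measurable_fst.add measurable_snd).prodMk measurable_snd

lemma Itg_mono {x1 x2 : ℝ} (hx1 : 0 < x1) (h12 : x1 < x2) :
    (1 / Real.sqrt (4*π*x1)) * Itg x1 ≤ (1 / Real.sqrt (4*π*x2)) * Itg x2 := by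
  set δ := x2 - x1 with hδdef
  have hδ : 0 < δ := by simp [hδdef]; linarith
  have hx2 : (0:ℝ) < x2 := by linarith
  have hx2' : x2 = x1 + δ := by rw [hδdef]; ring
  set κ := Real.sqrt (4*π*x1*δ/(x1+δ)) with hκdef
  have hκ : 0 < κ := Real.sqrt_pos.2 (by positivity)
  set G : ℝ × ℝ → ℝ := fun p =>
    Real.tanh ((p.1+p.2)/2) * (Real.exp (-(p.1-x1)^2/(4*x1)) * Real.exp (-(p.2-δ)^2/(4*δ)))
    with hGdef
  have hGint : Integrable G ((volume : Measure ℝ).prod volume) := by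
    apply Integrable.bdd_mul ((integrable4 hx1 x1).mul_prod (integrable4 hδ δ))
      (continuous_tanh'.comp ((continuous_fst.add continuous_snd).div_const 2)).aestronglyMeasurable
    exact Filter.Eventually.of_forall (fun p => abs_tanh_le_one _)
  -- lower bound: ∬ G ≥ √(4πδ) * Itg x1
  have hlow : Real.sqrt (4*π*δ) * Itg x1 ≤ ∫ p, G p ∂((volume : Measure ℝ).prod volume) := by
    rw [MeasureTheory.integral_prod G hGint]
    have hinner : ∀ a : ℝ, (∫ u : ℝ, G (a, u))
        = Real.exp (-(a-x1)^2/(4*x1)) * ∫ u : ℝ, Real.tanh ((a+u)/2) * Real.exp (-(u-δ)^2/(4*δ)) := by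
      intro a
      rw [← MeasureTheory.integral_const_mul]
      congr 1; funext u
      simp only [hGdef]
      ring
    have hstep : ∫ a : ℝ, Real.exp (-(a-x1)^2/(4*x1)) * (Real.tanh (a/2) * Real.sqrt (4*π*δ))
        = Real.sqrt (4*π*δ) * Itg x1 := by
      rw [Itg, ← MeasureTheory.integral_const_mul]
      congr 1; funext a
      ring
    calc Real.sqrt (4*π*δ) * Itg x1
        = ∫ a : ℝ, Real.exp (-(a-x1)^2/(4*x1)) * (Real.tanh (a/2) * Real.sqrt (4*π*δ)) :=
          hstep.symm
      _ ≤ ∫ a : ℝ, (fun a => ∫ u : ℝ, G (a, u)) a := by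
          apply integral_mono
          · have : Integrable (fun a : ℝ => Real.tanh (a/2) * Real.sqrt (4*π*δ)
                * Real.exp (-(a-x1)^2/(4*x1))) := by
              apply Integrable.bdd_mul (c := Real.sqrt (4*π*δ)) (integrable4 hx1 x1)
              · exact ((continuous_tanh'.comp (continuous_id.div_const 2)).mul continuous_const).aestronglyMeasurable
              · refine Filter.Eventually.of_forall (fun a => ?_)
                rw [Real.norm_eq_abs, abs_mul]
                calc |Real.tanh (a/2)| * |Real.sqrt (4*π*δ)| ≤ 1 * |Real.sqrt (4*π*δ)| := by
                      apply mul_le_mul_of_nonneg_right (abs_tanh_le_one _) (abs_nonneg _)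
                  _ = Real.sqrt (4*π*δ) := by rw [one_mul, abs_of_nonneg (Real.sqrt_nonneg _)]
            apply this.congr
            filter_upwards with a
            ring
          · exact hGint.integral_prod_left
          · intro a
            dsimp only
            rw [hinner a]
            apply mul_le_mul_of_nonneg_left (key_ineq hδ a) (Real.exp_pos _).le
      _ = ∫ a : ℝ, ∫ u : ℝ, G (a, u) := by rfl
  -- upper computation: ∬ G = κ * Itg x2
  have hup : ∫ p, G p ∂((volume : Measure ℝ).prod volume) = κ * Itg x2 := by
    have hemb : MeasurableEmbedding (fun z : ℝ × ℝ => (z.1 - z.2, z.2)) :=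
      shearE.measurableEmbedding
    have hmp : MeasurePreserving (fun z : ℝ × ℝ => (z.1 - z.2, z.2))
        ((volume : Measure ℝ).prod volume) ((volume : Measure ℝ).prod volume) :=
      measurePreserving_sub_prod volume volume
    rw [← hmp.integral_comp hemb G]
    have hH : (fun z : ℝ × ℝ => G (z.1 - z.2, z.2))
        = fun z : ℝ × ℝ => Real.tanh (z.1/2)
            * (Real.exp (-(z.1-z.2-x1)^2/(4*x1)) * Real.exp (-(z.2-δ)^2/(4*δ))) := by
      funext z
      simp only [hGdef]
      norm_num
    have hHint : Integrable (fun z : ℝ × ℝ => G (z.1 - z.2, z.2))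
        ((volume : Measure ℝ).prod volume) := (hmp.integrable_comp_emb hemb).2 hGint
    calc ∫ z, G (z.1 - z.2, z.2) ∂((volume : Measure ℝ).prod volume)
        = ∫ w : ℝ, ∫ u : ℝ, G (w - u, u) := by
          exact MeasureTheory.integral_prod _ hHint
      _ = ∫ w : ℝ, Real.tanh (w/2) * (κ * Real.exp (-(w-(x1+δ))^2/(4*(x1+δ)))) := by
          congr 1; funext w
          have : ∀ u : ℝ, G (w - u, u) = Real.tanh (w/2)
              * (Real.exp (-(w-u-x1)^2/(4*x1)) * Real.exp (-(u-δ)^2/(4*δ))) := by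
            intro u
            simp only [hGdef]
            norm_num
          simp_rw [this]
          rw [MeasureTheory.integral_const_mul, conv_gauss hx1 hδ w]
      _ = κ * Itg x2 := by
          rw [Itg, ← MeasureTheory.integral_const_mul]
          congr 1; funext w
          rw [← hx2']
          ring
  -- combine with constants
  have hconst : Real.sqrt (4*π*x1) * Real.sqrt (4*π*δ) = κ * Real.sqrt (4*π*x2) := by
    rw [hκdef, ← Real.sqrt_mul (by positivity), ← Real.sqrt_mul (by positivity)]
    congr 1
    rw [hx2']
    field_simp
  have hs1 : (0:ℝ) < Real.sqrt (4*π*x1) := Real.sqrt_pos.2 (by positivity)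
  have hs2 : (0:ℝ) < Real.sqrt (4*π*x2) := Real.sqrt_pos.2 (by positivity)
  have hsδ : (0:ℝ) < Real.sqrt (4*π*δ) := Real.sqrt_pos.2 (by positivity)
  have hmain : Real.sqrt (4*π*δ) * Itg x1 ≤ κ * Itg x2 := by
    rw [← hup]; exact hlow
  rw [div_mul_eq_mul_div, div_mul_eq_mul_div, one_mul, one_mul,
    div_le_div_iff₀ hs1 hs2]
  have h2 : Itg x1 * Real.sqrt (4*π*x2) * Real.sqrt (4*π*δ)
      ≤ Itg x2 * Real.sqrt (4*π*x1) * Real.sqrt (4*π*δ) := by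
    have h3 := mul_le_mul_of_nonneg_right hmain hs2.le
    calc Itg x1 * Real.sqrt (4*π*x2) * Real.sqrt (4*π*δ)
        = Real.sqrt (4*π*δ) * Itg x1 * Real.sqrt (4*π*x2) := by ring
      _ ≤ κ * Itg x2 * Real.sqrt (4*π*x2) := h3
      _ = Itg x2 * (κ * Real.sqrt (4*π*x2)) := by ring
      _ = Itg x2 * (Real.sqrt (4*π*x1) * Real.sqrt (4*π*δ)) := by rw [← hconst]
      _ = Itg x2 * Real.sqrt (4*π*x1) * Real.sqrt (4*π*δ) := by ring
  exact le_of_mul_le_mul_right h2 hsδ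

noncomputable def Jint (x : ℝ) : ℝ :=
  ∫ z : ℝ, Real.tanh ((x + Real.sqrt (2*x) * z)/2) * Real.exp (-z^2/2)

lemma Itg_eq_Jint {x : ℝ} (hx : 0 < x) : Itg x = Real.sqrt (2*x) * Jint x := by
  have hs : (0:ℝ) < Real.sqrt (2*x) := Real.sqrt_pos.2 (by linarith)
  have hsq : Real.sqrt (2*x) ^ 2 = 2*x := Real.sq_sqrt (by linarith)
  set f : ℝ → ℝ := fun u => Real.tanh (u / 2) * Real.exp (-(u - x) ^ 2 / (4 * x)) with hf
  have h1 : ∫ z : ℝ, f (Real.sqrt (2*x) * z + x) = |(Real.sqrt (2*x))⁻¹| • ∫ u : ℝ, f u := by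
    have := MeasureTheory.Measure.integral_comp_mul_left (fun u => f (u + x)) (Real.sqrt (2*x))
    rw [integral_add_right_eq_self f x] at this
    exact this
  have h2 : ∀ z : ℝ, f (Real.sqrt (2*x) * z + x)
      = Real.tanh ((x + Real.sqrt (2*x) * z)/2) * Real.exp (-z^2/2) := by
    intro z
    rw [hf]
    have e1 : Real.sqrt (2*x) * z + x - x = Real.sqrt (2*x) * z := by ring
    simp only []
    rw [e1]
    congr 1
    · congr 1; ring
    · congr 1
      rw [mul_pow, hsq]
      field_simp
      ring
  simp_rw [h2] at h1
  rw [abs_of_nonneg (by positivity)] at h1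
  rw [smul_eq_mul] at h1
  rw [Itg, Jint, h1, ← mul_assoc, mul_inv_cancel₀ (ne_of_gt hs), one_mul]

lemma int_e : Integrable (fun z : ℝ => Real.exp (-z^2/2)) := by
  have h : ∀ z : ℝ, Real.exp (-z^2/2) = Real.exp (-(z-0)^2/(4*(1/2:ℝ))) := by
    intro z; congr 1; ring
  simp_rw [h]
  exact integrable4 one_half_pos 0

lemma val_e : ∫ z : ℝ, Real.exp (-z^2/2) = Real.sqrt (2*π) := by
  have h : ∀ z : ℝ, Real.exp (-z^2/2) = Real.exp (-(z-0)^2/(4*(1/2:ℝ))) := by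
    intro z; congr 1; ring
  simp_rw [h]
  rw [int_gauss4 one_half_pos 0]
  congr 1; ring

lemma cont_tanh_term (x : ℝ) : Continuous (fun z : ℝ => Real.tanh ((x + Real.sqrt (2*x) * z)/2)) :=
  continuous_tanh'.comp ((continuous_const.add (continuous_const.mul continuous_id)).div_const 2)

lemma int_J (x : ℝ) : Integrable (fun z : ℝ =>
    Real.tanh ((x + Real.sqrt (2*x) * z)/2) * Real.exp (-z^2/2)) :=
  Integrable.bdd_mul int_e (cont_tanh_term x).aestronglyMeasurable (c := 1) (Filter.Eventually.of_forall fun z => abs_tanh_le_one _)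

lemma tanh_tendsto_atTop : Tendsto Real.tanh atTop (𝓝 1) := by
  have h : ∀ t : ℝ, Real.tanh t = 1 - 2/(Real.exp (2*t)+1) := by
    intro t
    have : t = (2*t)/2 := by ring
    rw [this, tanh_half (2*t)]
    have : (0:ℝ) < Real.exp (2*t) + 1 := by positivity
    field_simp
    ring
  have heq : Real.tanh = fun t : ℝ => 1 - 2/(Real.exp (2*t)+1) := funext h
  rw [heq]
  have h2 : Tendsto (fun t : ℝ => 2/(Real.exp (2*t)+1)) atTop (𝓝 0) := by
    apply Tendsto.div_atTop tendsto_const_nhds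
    exact Tendsto.atTop_add (Real.tendsto_exp_atTop.comp
      (tendsto_id.const_mul_atTop two_pos)) tendsto_const_nhds
  have := tendsto_const_nhds (α := ℝ) (x := (1:ℝ)) (f := atTop)
  simpa using this.sub h2

lemma arg_tendsto (z : ℝ) : Tendsto (fun x : ℝ => (x + Real.sqrt (2*x) * z)/2) atTop atTop := by
  apply tendsto_atTop_mono' _ _ (tendsto_id.atTop_div_const (by norm_num : (0:ℝ) < 4))
  filter_upwards [eventually_ge_atTop (0:ℝ), eventually_ge_atTop (8*z^2)] with x hx0 hx8
  have habs : Real.sqrt (2*x) * |z| ≤ x/2 := by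
    have h1 : Real.sqrt (2*x) * |z| = Real.sqrt (2*x*z^2) := by
      rw [Real.sqrt_mul (show (0:ℝ) ≤ 2*x by linarith) (z^2), Real.sqrt_sq_eq_abs]
    rw [h1]
    have h2 : 2*x*z^2 ≤ (x/2)^2 := by nlinarith
    calc Real.sqrt (2*x*z^2) ≤ Real.sqrt ((x/2)^2) := Real.sqrt_le_sqrt h2
      _ = x/2 := Real.sqrt_sq (by linarith)
  have : -(x/2) ≤ Real.sqrt (2*x) * z := by
    have := neg_abs_le z
    nlinarith [Real.sqrt_nonneg (2*x), abs_nonneg z, neg_abs_le (Real.sqrt (2*x) * z),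
      abs_mul (Real.sqrt (2*x)) z, abs_of_nonneg (Real.sqrt_nonneg (2*x))]
  show id x / 4 ≤ (x + Real.sqrt (2*x) * z)/2
  simp only [id]
  linarith

lemma Jint_tendsto_atTop : Tendsto Jint atTop (𝓝 (Real.sqrt (2*π))) := by
  rw [← val_e]
  apply tendsto_integral_filter_of_dominated_convergence (fun z : ℝ => Real.exp (-z^2/2))
  · filter_upwards with x
    exact ((cont_tanh_term x).mul (Real.continuous_exp.comp (by continuity))).aestronglyMeasurable
  · filter_upwards with x
    filter_upwards with z
    rw [Real.norm_eq_abs, abs_mul, Real.abs_exp]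
    calc |Real.tanh ((x + Real.sqrt (2*x) * z)/2)| * Real.exp (-z^2/2)
        ≤ 1 * Real.exp (-z^2/2) :=
          mul_le_mul_of_nonneg_right (abs_tanh_le_one _) (Real.exp_pos _).le
      _ = Real.exp (-z^2/2) := one_mul _
  · exact int_e
  · filter_upwards with z
    have h1 : Tendsto (fun x : ℝ => Real.tanh ((x + Real.sqrt (2*x) * z)/2)) atTop (𝓝 1) :=
      tanh_tendsto_atTop.comp (arg_tendsto z)
    have := h1.mul_const (Real.exp (-z^2/2))
    simpa using this

lemma Jint_tendsto_zero : Tendsto Jint (nhdsWithin 0 (Set.Ioi 0)) (𝓝 0) := by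
  have h0 : (0:ℝ) = ∫ z : ℝ, (0:ℝ) := by simp
  rw [h0]
  apply tendsto_integral_filter_of_dominated_convergence (fun z : ℝ => Real.exp (-z^2/2))
  · filter_upwards with x
    exact ((cont_tanh_term x).mul (Real.continuous_exp.comp (by continuity))).aestronglyMeasurable
  · filter_upwards with x
    filter_upwards with z
    rw [Real.norm_eq_abs, abs_mul, Real.abs_exp]
    calc |Real.tanh ((x + Real.sqrt (2*x) * z)/2)| * Real.exp (-z^2/2)
        ≤ 1 * Real.exp (-z^2/2) :=
          mul_le_mul_of_nonneg_right (abs_tanh_le_one _) (Real.exp_pos _).le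
      _ = Real.exp (-z^2/2) := one_mul _
  · exact int_e
  · filter_upwards with z
    have harg : Tendsto (fun x : ℝ => (x + Real.sqrt (2*x) * z)/2) (nhdsWithin 0 (Set.Ioi 0)) (𝓝 0) := by
      have hca : Continuous (fun x : ℝ => (x + Real.sqrt (2*x) * z)/2) := by
        apply Continuous.div_const
        exact continuous_id.add ((Real.continuous_sqrt.comp (continuous_const.mul continuous_id)).mul continuous_const)
      have htd := hca.tendsto 0
      have h00 : ((0:ℝ) + Real.sqrt (2*(0:ℝ)) * z)/2 = 0 := by simp
      rw [h00] at htd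
      exact htd.mono_left nhdsWithin_le_nhds
    have h1 : Tendsto (fun x : ℝ => Real.tanh ((x + Real.sqrt (2*x) * z)/2))
        (nhdsWithin 0 (Set.Ioi 0)) (𝓝 0) := by
      have := (continuous_tanh'.tendsto 0).comp harg
      simpa [Real.tanh_zero, Function.comp_def] using this
    have := h1.mul_const (Real.exp (-z^2/2))
    simpa using this

lemma phiGA_eq' {x : ℝ} (hx : x ≠ 0) : phiGA x = 1 - (1 / Real.sqrt (4*π*x)) * Itg x := by
  rw [phiGA, if_neg hx]
  rfl

lemma phiGA_eqJ {x : ℝ} (hx : 0 < x) : phiGA x = 1 - (1 / Real.sqrt (2*π)) * Jint x := by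
  rw [phiGA_eq' (ne_of_gt hx), Itg_eq_Jint hx]
  have h4 : Real.sqrt (4*π*x) = Real.sqrt (2*π) * Real.sqrt (2*x) := by
    rw [← Real.sqrt_mul (by positivity)]
    congr 1; ring
  rw [h4]
  have h2π : (0:ℝ) < Real.sqrt (2*π) := Real.sqrt_pos.2 (by positivity)
  have h2x : (0:ℝ) < Real.sqrt (2*x) := Real.sqrt_pos.2 (by linarith)
  field_simp

lemma Jint_pos {x : ℝ} (hx : 0 < x) : 0 < Jint x := by
  have hrefl : Jint x = ∫ z : ℝ, Real.tanh ((x - Real.sqrt (2*x) * z)/2) * Real.exp (-z^2/2) := by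
    rw [Jint, ← integral_neg_eq_self
      (fun z : ℝ => Real.tanh ((x + Real.sqrt (2*x) * z)/2) * Real.exp (-z^2/2)) volume]
    congr 1; funext z
    have e1 : x + Real.sqrt (2*x) * (-z) = x - Real.sqrt (2*x) * z := by ring
    rw [e1, neg_sq]
  have hint2 : Integrable (fun z : ℝ => Real.tanh ((x - Real.sqrt (2*x) * z)/2) * Real.exp (-z^2/2)) :=
    Integrable.bdd_mul int_e
      (continuous_tanh'.comp ((continuous_const.sub (continuous_const.mul continuous_id)).div_const 2)).aestronglyMeasurable
      (c := 1) (Filter.Eventually.of_forall fun z => abs_tanh_le_one _)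
  have h2J : 2 * Jint x = ∫ z : ℝ, (Real.tanh ((x + Real.sqrt (2*x) * z)/2)
      + Real.tanh ((x - Real.sqrt (2*x) * z)/2)) * Real.exp (-z^2/2) := by
    have := integral_add (int_J x) hint2
    rw [two_mul]
    nth_rewrite 2 [hrefl]
    rw [Jint, ← this]
    congr 1; funext z
    ring
  have hpos : ∀ z : ℝ, 0 < (Real.tanh ((x + Real.sqrt (2*x) * z)/2)
      + Real.tanh ((x - Real.sqrt (2*x) * z)/2)) * Real.exp (-z^2/2) := by
    intro z
    apply mul_pos _ (Real.exp_pos _)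
    have h1 : -((x - Real.sqrt (2*x) * z)/2) < (x + Real.sqrt (2*x) * z)/2 := by linarith
    have := tanh_strictMono h1
    rw [Real.tanh_neg] at this
    linarith
  have hintsum : Integrable (fun z : ℝ => (Real.tanh ((x + Real.sqrt (2*x) * z)/2)
      + Real.tanh ((x - Real.sqrt (2*x) * z)/2)) * Real.exp (-z^2/2)) := by
    have := (int_J x).add hint2
    apply this.congr
    filter_upwards with z
    simp only [Pi.add_apply]
    ring
  have hP : 0 < ∫ z : ℝ, (Real.tanh ((x + Real.sqrt (2*x) * z)/2)
      + Real.tanh ((x - Real.sqrt (2*x) * z)/2)) * Real.exp (-z^2/2) := by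
    rw [integral_pos_iff_support_of_nonneg (fun z => (hpos z).le) hintsum]
    have : Function.support (fun z : ℝ => (Real.tanh ((x + Real.sqrt (2*x) * z)/2)
        + Real.tanh ((x - Real.sqrt (2*x) * z)/2)) * Real.exp (-z^2/2)) = Set.univ :=
      Set.eq_univ_of_forall fun z => ne_of_gt (hpos z)
    rw [this]
    simp [Real.volume_univ]
  linarith [h2J, hP]

lemma Jint_lt {x : ℝ} (hx : 0 < x) : Jint x < Real.sqrt (2*π) := by
  have hdiff : Real.sqrt (2*π) - Jint x
      = ∫ z : ℝ, (1 - Real.tanh ((x + Real.sqrt (2*x) * z)/2)) * Real.exp (-z^2/2) := by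
    rw [← val_e, Jint, ← integral_sub int_e (int_J x)]
    congr 1; funext z
    ring
  have hpos : ∀ z : ℝ, 0 < (1 - Real.tanh ((x + Real.sqrt (2*x) * z)/2)) * Real.exp (-z^2/2) := by
    intro z
    apply mul_pos _ (Real.exp_pos _)
    linarith [tanh_lt_one' ((x + Real.sqrt (2*x) * z)/2)]
  have hint : Integrable (fun z : ℝ => (1 - Real.tanh ((x + Real.sqrt (2*x) * z)/2)) * Real.exp (-z^2/2)) := by
    have := int_e.sub (int_J x)
    apply this.congr
    filter_upwards with z
    simp only [Pi.sub_apply]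
    ring
  have hP : 0 < ∫ z : ℝ, (1 - Real.tanh ((x + Real.sqrt (2*x) * z)/2)) * Real.exp (-z^2/2) := by
    rw [integral_pos_iff_support_of_nonneg (fun z => (hpos z).le) hint]
    have : Function.support (fun z : ℝ => (1 - Real.tanh ((x + Real.sqrt (2*x) * z)/2)) * Real.exp (-z^2/2)) = Set.univ :=
      Set.eq_univ_of_forall fun z => ne_of_gt (hpos z)
    rw [this]
    simp [Real.volume_univ]
  linarith [hdiff, hP]

lemma phiGA_bounds {x : ℝ} (hx : 0 < x) : 0 < phiGA x ∧ phiGA x < 1 := by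
  rw [phiGA_eqJ hx]
  have h2π : (0:ℝ) < Real.sqrt (2*π) := Real.sqrt_pos.2 (by positivity)
  have h1 := Jint_pos hx
  have h2 := Jint_lt hx
  constructor
  · have : (1 / Real.sqrt (2*π)) * Jint x < (1 / Real.sqrt (2*π)) * Real.sqrt (2*π) :=
      mul_lt_mul_of_pos_left h2 (by positivity)
    rw [one_div, inv_mul_cancel₀ (ne_of_gt h2π)] at this
    rw [one_div]
    linarith
  · have : 0 < (1 / Real.sqrt (2*π)) * Jint x := by positivity
    linarith

lemma phiGA_anti : ∀ ⦃x1 x2 : ℝ⦄, 0 < x1 → x1 ≤ x2 → phiGA x2 ≤ phiGA x1 := by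
  intro x1 x2 h1 h12
  rcases eq_or_lt_of_le h12 with rfl | hlt
  · exact le_refl _
  · rw [phiGA_eq' (ne_of_gt h1), phiGA_eq' (ne_of_gt (lt_trans h1 hlt))]
    have := Itg_mono h1 hlt
    linarith

lemma phiGA_contAt {x0 : ℝ} (hx0 : 0 < x0) : ContinuousAt phiGA x0 := by
  have hJ : ContinuousAt Jint x0 := by
    apply continuousAt_of_dominated (bound := fun z : ℝ => Real.exp (-z^2/2))
    · filter_upwards with x
      exact ((cont_tanh_term x).mul (Real.continuous_exp.comp (by continuity))).aestronglyMeasurable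
    · filter_upwards with x
      filter_upwards with z
      rw [Real.norm_eq_abs, abs_mul, Real.abs_exp]
      calc |Real.tanh ((x + Real.sqrt (2*x) * z)/2)| * Real.exp (-z^2/2)
          ≤ 1 * Real.exp (-z^2/2) :=
            mul_le_mul_of_nonneg_right (abs_tanh_le_one _) (Real.exp_pos _).le
        _ = Real.exp (-z^2/2) := one_mul _
    · exact int_e
    · filter_upwards with z
      apply Continuous.continuousAt
      apply Continuous.mul _ continuous_const
      exact continuous_tanh'.comp ((continuous_id.add
        ((Real.continuous_sqrt.comp (continuous_const.mul continuous_id)).mul continuous_const)).div_const 2)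
  have heq : phiGA =ᶠ[𝓝 x0] fun x => 1 - (1 / Real.sqrt (2*π)) * Jint x := by
    filter_upwards [IsOpen.mem_nhds isOpen_Ioi hx0] with x hx
    exact phiGA_eqJ hx
  exact (continuousAt_const.sub (continuousAt_const.mul hJ)).congr heq.symm

lemma phiGA_top : Tendsto phiGA atTop (𝓝 0) := by
  have h2π : Real.sqrt (2*π) ≠ 0 := ne_of_gt (Real.sqrt_pos.2 (by positivity))
  have heq : (fun x => 1 - (1 / Real.sqrt (2*π)) * Jint x) =ᶠ[atTop] phiGA := by
    filter_upwards [eventually_gt_atTop (0:ℝ)] with x hx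
    exact (phiGA_eqJ hx).symm
  have hlim : Tendsto (fun x => 1 - (1 / Real.sqrt (2*π)) * Jint x) atTop
      (𝓝 (1 - (1 / Real.sqrt (2*π)) * Real.sqrt (2*π))) :=
    tendsto_const_nhds.sub (tendsto_const_nhds.mul Jint_tendsto_atTop)
  have hval : (1:ℝ) - (1 / Real.sqrt (2*π)) * Real.sqrt (2*π) = 0 := by
    rw [one_div, inv_mul_cancel₀ h2π, sub_self]
  rw [hval] at hlim
  exact hlim.congr' heq

lemma phiGA_zero_lim : Tendsto phiGA (nhdsWithin 0 (Set.Ioi 0)) (𝓝 1) := by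
  have heq : (fun x => 1 - (1 / Real.sqrt (2*π)) * Jint x) =ᶠ[nhdsWithin 0 (Set.Ioi 0)] phiGA := by
    filter_upwards [self_mem_nhdsWithin] with x hx
    exact (phiGA_eqJ hx).symm
  have hlim : Tendsto (fun x => 1 - (1 / Real.sqrt (2*π)) * Jint x) (nhdsWithin 0 (Set.Ioi 0))
      (𝓝 (1 - (1 / Real.sqrt (2*π)) * 0)) :=
    tendsto_const_nhds.sub (tendsto_const_nhds.mul Jint_tendsto_zero)
  rw [mul_zero, sub_zero] at hlim
  exact hlim.congr' heq

/-- `φ(x) → 0` as `x → ∞` and `φ(x) → 1` as `x → 0⁺`; consequently (using that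
`φ : (0,∞) → (0,1)` is continuous and strictly decreasing, hence invertible onto
its range) the SPC-node Gaussian approximation update
`m ↦ φ⁻¹(1 - (1 - φ(m))^{K-1})` is well-defined and nondecreasing for `m > 0`:
there is `g : ℝ → ℝ` with `φ(g(m)) = 1 - (1 - φ(m))^{K-1}` and `g(m) > 0` for all
`m > 0`, and `g` monotone nondecreasing on `(0,∞)`. -/
theorem phiGA_limits_and_spc_update (K : ℕ) (hK : 2 ≤ K) :
    Tendsto phiGA atTop (nhds 0) ∧
      Tendsto phiGA (nhdsWithin 0 (Set.Ioi 0)) (nhds 1) ∧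
      ∃ g : ℝ → ℝ,
        (∀ m : ℝ, 0 < m →
          phiGA (g m) = 1 - (1 - phiGA m) ^ (K - 1) ∧ 0 < g m) ∧
        MonotoneOn g (Set.Ioi (0:ℝ)) := by
  refine ⟨phiGA_top, phiGA_zero_lim, ?_⟩
  set t : ℝ → ℝ := fun m => 1 - (1 - phiGA m)^(K-1) with ht
  have hK1 : 1 ≤ K - 1 := by omega
  have ht_lt_one : ∀ m : ℝ, 0 < m → t m < 1 := by
    intro m hm
    have h1 := (phiGA_bounds hm).2
    have : (0:ℝ) < (1 - phiGA m)^(K-1) := pow_pos (by linarith) _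
    simp only [ht]
    linarith
  have ht_ge_phi : ∀ m : ℝ, 0 < m → phiGA m ≤ t m := by
    intro m hm
    have h0 := (phiGA_bounds hm).1
    have h1 := (phiGA_bounds hm).2
    have hle : (1 - phiGA m)^(K-1) ≤ (1 - phiGA m)^1 :=
      pow_le_pow_of_le_one (by linarith) (by linarith) hK1
    rw [pow_one] at hle
    simp only [ht]
    linarith
  have ht_pos : ∀ m : ℝ, 0 < m → 0 < t m := fun m hm =>
    lt_of_lt_of_le (phiGA_bounds hm).1 (ht_ge_phi m hm)
  have ht_anti : ∀ m1 m2 : ℝ, 0 < m1 → m1 ≤ m2 → t m2 ≤ t m1 := by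
    intro m1 m2 h1 h12
    have hφ : phiGA m2 ≤ phiGA m1 := phiGA_anti h1 h12
    have h1' := (phiGA_bounds h1).2
    have hle : (1 - phiGA m1)^(K-1) ≤ (1 - phiGA m2)^(K-1) :=
      pow_le_pow_left₀ (by linarith) (by linarith) _
    simp only [ht]
    linarith
  set S : ℝ → Set ℝ := fun m => {y | 0 < y ∧ phiGA y ≤ t m} with hS
  have hmem : ∀ m : ℝ, 0 < m → m ∈ S m := fun m hm => ⟨hm, ht_ge_phi m hm⟩
  have hne : ∀ m : ℝ, 0 < m → (S m).Nonempty := fun m hm => ⟨m, hmem m hm⟩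
  have hbdd : ∀ m : ℝ, BddBelow (S m) := fun m => ⟨0, fun y hy => hy.1.le⟩
  set g : ℝ → ℝ := fun m => sInf (S m) with hg
  have heps : ∀ m : ℝ, 0 < m → ∃ ε > 0, ∀ y ∈ S m, ε ≤ y := by
    intro m hm
    have hev : phiGA ⁻¹' (Set.Ioi (t m)) ∈ nhdsWithin 0 (Set.Ioi 0) :=
      phiGA_zero_lim (Ioi_mem_nhds (ht_lt_one m hm))
    rw [mem_nhdsGT_iff_exists_Ioo_subset] at hev
    obtain ⟨u, hu, hsub⟩ := hev
    refine ⟨u, hu, fun y hy => ?_⟩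
    by_contra hlt
    push_neg at hlt
    have : y ∈ Set.Ioo (0:ℝ) u := ⟨hy.1, hlt⟩
    exact absurd hy.2 (not_le.2 (hsub this))
  have hgpos : ∀ m : ℝ, 0 < m → 0 < g m := by
    intro m hm
    obtain ⟨ε, hε, hεle⟩ := heps m hm
    exact lt_of_lt_of_le hε (le_csInf (hne m hm) hεle)
  have hgle : ∀ m : ℝ, 0 < m → ∀ y ∈ S m, g m ≤ y := fun m _ y hy => csInf_le (hbdd m) hy
  -- φ (g m) = t m
  have hval : ∀ m : ℝ, 0 < m → phiGA (g m) = t m := by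
    intro m hm
    have hgm := hgpos m hm
    -- upper: φ (g m) ≤ t m via continuity
    have hub : phiGA (g m) ≤ t m := by
      by_contra hcon
      push_neg at hcon
      have hev2 : phiGA ⁻¹' (Set.Ioi (t m)) ∈ 𝓝 (g m) :=
        (phiGA_contAt hgm) (Ioi_mem_nhds hcon)
      rw [Metric.mem_nhds_iff] at hev2
      obtain ⟨δ, hδ, hball⟩ := hev2
      have : ∃ y ∈ S m, y < g m + δ := by
        rw [← csInf_lt_iff (hbdd m) (hne m hm)]
        simp only [hg]
        linarith
      obtain ⟨y, hyS, hylt⟩ := this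
      have hyge : g m ≤ y := hgle m hm y hyS
      have : y ∈ Metric.ball (g m) δ := by
        rw [Metric.mem_ball, Real.dist_eq, abs_lt]
        constructor <;> linarith
      exact absurd hyS.2 (not_le.2 (hball this))
    -- lower: via IVT point
    have hlb : t m ≤ phiGA (g m) := by
      have hev : phiGA ⁻¹' (Set.Ioi (t m)) ∈ nhdsWithin 0 (Set.Ioi 0) :=
        phiGA_zero_lim (Ioi_mem_nhds (ht_lt_one m hm))
      have hev' : ∀ᶠ y in nhdsWithin 0 (Set.Ioi 0), t m < phiGA y := hev
      have hself : ∀ᶠ y in nhdsWithin (0:ℝ) (Set.Ioi (0:ℝ)), y ∈ Set.Ioi (0:ℝ) := self_mem_nhdsWithin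
      obtain ⟨a, haφ, ha0⟩ := (hev'.and hself).exists
      have ha0' : (0:ℝ) < a := ha0
      have ham : a ≤ m := by
        by_contra hcon
        push_neg at hcon
        have := phiGA_anti hm hcon.le
        have h2 := ht_ge_phi m hm
        linarith
      have hcontOn : ContinuousOn phiGA (Set.Icc a m) := fun y hy =>
        (phiGA_contAt (lt_of_lt_of_le ha0' hy.1)).continuousWithinAt
      have hmemI : t m ∈ Set.Icc (phiGA m) (phiGA a) :=
        ⟨ht_ge_phi m hm, haφ.le⟩
      obtain ⟨y0, hy0I, hy0⟩ := intermediate_value_Icc' ham hcontOn hmemI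
      have hy0S : y0 ∈ S m := ⟨lt_of_lt_of_le ha0' hy0I.1, hy0.le⟩
      have : g m ≤ y0 := hgle m hm y0 hy0S
      calc t m = phiGA y0 := hy0.symm
        _ ≤ phiGA (g m) := phiGA_anti hgm this
    exact le_antisymm hub hlb
  refine ⟨g, fun m hm => ⟨hval m hm, hgpos m hm⟩, ?_⟩
  intro m1 h1 m2 h2 h12
  have hsub : S m2 ⊆ S m1 := fun y hy => ⟨hy.1, le_trans hy.2 (ht_anti m1 m2 h1 h12)⟩
  exact csInf_le_csInf (hbdd m1) (hne m2 h2) hsub
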